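/- Let f(a) = a/(1-e^{-a}). If c > 1 and a is the unique positive solution of f(a) = c, then c ≥ a ≥ c(1 - e^{-c/2}). -/

import Mathlib

/-!
Clearing the denominator, `a = c (1 - e^{-a})`, which gives `a ≤ c` at once. Since
`1 + a ≤ e^a`, the function `a / (1 - e^{-a})` is at most `1 + a`, so `a ≥ c - 1 ≥ c / 2`
when `c ≥ 2`; feeding `e^{-a} ≤ e^{-c/2}` back into `a = c (1 - e^{-a})` gives the lower bound.
-/

open Real

lemma one_add_mul_exp_neg_le_one (x : ℝ) : (1 + x) * exp (-x) ≤ 1 := by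
  calc (1 + x) * exp (-x) ≤ exp x * exp (-x) := by gcongr; linarith [add_one_le_exp x]
    _ = 1 := by rw [← exp_add, add_neg_cancel, exp_zero]

lemma one_sub_exp_neg_pos {x : ℝ} (hx : 0 < x) : 0 < 1 - exp (-x) :=
  sub_pos.mpr (exp_lt_one_iff.mpr (neg_neg_of_pos hx))

lemma div_one_sub_exp_neg_le_one_add {x : ℝ} (hx : 0 < x) : x / (1 - exp (-x)) ≤ 1 + x := by
  rw [div_le_iff₀ (one_sub_exp_neg_pos hx)]
  linarith [one_add_mul_exp_neg_le_one x]

/-- If `c ≥ 2` and `a` is the unique positive solution of `a/(1-e^{-a}) = c`, then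
`c ≥ a ≥ c(1 - e^{-c/2})`. -/
theorem a_bounds (c a : ℝ) (hc : 2 ≤ c) (ha : 0 < a)
    (hfa : a / (1 - exp (-a)) = c) :
    a ≤ c ∧ c * (1 - exp (-c / 2)) ≤ a := by
  have hac : a = c * (1 - exp (-a)) := (div_eq_iff (one_sub_exp_neg_pos ha).ne').mp hfa
  have hc_le : c ≤ 1 + a := hfa ▸ div_one_sub_exp_neg_le_one_add ha
  constructor
  · nlinarith [exp_pos (-a)]
  · calc c * (1 - exp (-c / 2)) ≤ c * (1 - exp (-a)) := by
          gcongr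
          linarith
      _ = a := hac.symm
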